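/- arXiv:2209.02938 — 2 statements merged into one kernel-verified Lean document; each statement's English description precedes it below -/
import Mathlib

section
/- Let λ ∈ ℝ \ {0}, let Θ ⊆ ℝ^d be open and convex, let φ : Θ → ℝ be regular c_λ-convex with Φ_λ := (1/λ)(exp(λφ) − 1), and let f : Θ → ℝ be differentiable. If θ : I → Θ is a conformal mirror descent trajectory for f, then the dual variable ζ_t := ∇Φ_λ(θ_t) satisfies ζ'_t = −e^{λφ(θ_t)} ∇f(θ_t) for all t ∈ I. -/
open Real Set
open scoped RealInnerProductSpace

/-- The λ-logarithmic divergence `L_{λ,φ}[θ : θ']`. -/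
noncomputable def Llog (lam : ℝ) {d : ℕ} (φ : EuclideanSpace ℝ (Fin d) → ℝ)
    (θ θ' : EuclideanSpace ℝ (Fin d)) : ℝ :=
  φ θ - φ θ' - (1 / lam) * Real.log (1 + lam * ⟪gradient φ θ', θ - θ'⟫)

/-- `Φ_λ = (1/λ)(exp(λφ) − 1)`. -/
noncomputable def Philam (lam : ℝ) {d : ℕ} (φ : EuclideanSpace ℝ (Fin d) → ℝ)
    (θ : EuclideanSpace ℝ (Fin d)) : ℝ :=
  (1 / lam) * (Real.exp (lam * φ θ) - 1)

/-- The Bregman divergence `B_g[θ : θ']`. -/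
noncomputable def Breg {d : ℕ} (g : EuclideanSpace ℝ (Fin d) → ℝ)
    (θ θ' : EuclideanSpace ℝ (Fin d)) : ℝ :=
  g θ - g θ' - ⟪gradient g θ', θ - θ'⟫

/-- The metric matrix `G_λ(θ) = ∇²φ(θ) + λ∇φ(θ)∇φ(θ)ᵀ` applied to the vector `v`. -/
noncomputable def Glam (lam : ℝ) {d : ℕ} (φ : EuclideanSpace ℝ (Fin d) → ℝ)
    (θ v : EuclideanSpace ℝ (Fin d)) : EuclideanSpace ℝ (Fin d) :=
  fderiv ℝ (gradient φ) θ v + (lam * ⟪gradient φ θ, v⟫) • gradient φ θ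

/-- The λ-mirror map `∇^{(λ)}φ(θ) = ∇φ(θ)/(1 − λ⟨∇φ(θ), θ⟩)`. -/
noncomputable def mirrorMap (lam : ℝ) {d : ℕ} (φ : EuclideanSpace ℝ (Fin d) → ℝ)
    (θ : EuclideanSpace ℝ (Fin d)) : EuclideanSpace ℝ (Fin d) :=
  (1 - lam * ⟪gradient φ θ, θ⟫)⁻¹ • gradient φ θ

/-- `φ` is regular `c_λ`-convex on `Θ`: smooth, `Φ_λ` convex with positive definite Hessian,
and `1 − λ⟨∇φ(θ), θ⟩ > 0` on `Θ`. -/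
def IsRegularCConvex (lam : ℝ) {d : ℕ} (Θ : Set (EuclideanSpace ℝ (Fin d)))
    (φ : EuclideanSpace ℝ (Fin d) → ℝ) : Prop :=
  ContDiffOn ℝ (⊤ : ℕ∞) φ Θ ∧
  ConvexOn ℝ Θ (Philam lam φ) ∧
  (∀ θ ∈ Θ, ∀ v, v ≠ 0 → 0 < ⟪v, fderiv ℝ (gradient (Philam lam φ)) θ v⟫) ∧
  (∀ θ ∈ Θ, 0 < 1 - lam * ⟪gradient φ θ, θ⟫)

/-- `θ` (with derivative `dθ`) is a conformal mirror descent trajectory for `f` on `I`: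
`G_λ(θ_t) θ'_t = −∇f(θ_t)` for all `t ∈ I`. -/
def IsCMDTrajectory (lam : ℝ) {d : ℕ} (φ f : EuclideanSpace ℝ (Fin d) → ℝ)
    (I : Set ℝ) (θ dθ : ℝ → EuclideanSpace ℝ (Fin d)) : Prop :=
  ∀ t ∈ I, HasDerivAt θ (dθ t) t ∧ Glam lam φ (θ t) (dθ t) = -(gradient f (θ t))

lemma inner_grad {d : ℕ} (φ : EuclideanSpace ℝ (Fin d) → ℝ) (x v : EuclideanSpace ℝ (Fin d)) :
    ⟪gradient φ x, v⟫ = fderiv ℝ φ x v := by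
  rw [show gradient φ x = (InnerProductSpace.toDual ℝ _).symm (fderiv ℝ φ x) from rfl,
    InnerProductSpace.toDual_symm_apply]

lemma grad_Philam {d : ℕ} (lam : ℝ) (hlam : lam ≠ 0) (φ : EuclideanSpace ℝ (Fin d) → ℝ)
    (x : EuclideanSpace ℝ (Fin d)) (hφ : DifferentiableAt ℝ φ x) :
    gradient (Philam lam φ) x = Real.exp (lam * φ x) • gradient φ x := by
  have hh : HasDerivAt (fun u : ℝ => (1 / lam) * (Real.exp (lam * u) - 1))
      (Real.exp (lam * φ x)) (φ x) := by
    have h1 : HasDerivAt (fun u : ℝ => Real.exp (lam * u)) (Real.exp (lam * φ x) * lam) (φ x) :=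
      (Real.hasDerivAt_exp _).comp (φ x) (by simpa using (hasDerivAt_id (φ x)).const_mul lam)
    have := ((h1.sub_const 1).const_mul (1 / lam))
    rw [show (1 / lam) * (Real.exp (lam * φ x) * lam) = Real.exp (lam * φ x) by
      rw [one_div, mul_comm (Real.exp (lam * φ x)) lam, inv_mul_cancel_left₀ hlam]] at this
    exact this
  have hF : HasFDerivAt (Philam lam φ) (Real.exp (lam * φ x) • fderiv ℝ φ x) x := by
    have := hh.comp_hasFDerivAt x hφ.hasFDerivAt
    exact this
  rw [show gradient (Philam lam φ) x
      = (InnerProductSpace.toDual ℝ _).symm (fderiv ℝ (Philam lam φ) x) from rfl,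
    hF.fderiv, map_smul]
  rfl
/-- along a conformal mirror descent trajectory, the dual variable
`ζ_t = ∇Φ_λ(θ_t)` satisfies `ζ'_t = −e^{λφ(θ_t)}∇f(θ_t)`. -/
theorem stmt_6 {d : ℕ} (lam : ℝ) (hlam : lam ≠ 0)
    (Θ : Set (EuclideanSpace ℝ (Fin d))) (hopen : IsOpen Θ) (hconvΘ : Convex ℝ Θ)
    (φ : EuclideanSpace ℝ (Fin d) → ℝ) (hreg : IsRegularCConvex lam Θ φ)
    (f : EuclideanSpace ℝ (Fin d) → ℝ) (hf : DifferentiableOn ℝ f Θ)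
    (I : Set ℝ) (hI : I.OrdConnected)
    (θ dθ : ℝ → EuclideanSpace ℝ (Fin d)) (hmem : ∀ t ∈ I, θ t ∈ Θ)
    (htraj : IsCMDTrajectory lam φ f I θ dθ) :
    ∀ t ∈ I,
      HasDerivAt (fun s => gradient (Philam lam φ) (θ s))
        (-(Real.exp (lam * φ (θ t)) • gradient f (θ t))) t := by
  intro t ht
  obtain ⟨hθd, hG⟩ := htraj t ht
  set x₀ := θ t with hx₀def
  have hx₀ : x₀ ∈ Θ := hmem t ht
  have hφat : ∀ x ∈ Θ, ContDiffAt ℝ (⊤ : ℕ∞) φ x := fun x hx =>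
    hreg.1.contDiffAt (hopen.mem_nhds hx)
  have hφdiff : DifferentiableAt ℝ φ x₀ := ((hφat x₀ hx₀).differentiableAt (by simp))
  have hfd : ContDiffAt ℝ 1 (fderiv ℝ φ) x₀ := (hφat x₀ hx₀).fderiv_right (by exact WithTop.coe_le_coe.mpr le_top)
  have hgradEq : gradient φ = fun x => (InnerProductSpace.toDual ℝ _).symm (fderiv ℝ φ x) := rfl
  have hgraddiff : DifferentiableAt ℝ (gradient φ) x₀ := by
    rw [hgradEq]
    exact ((((InnerProductSpace.toDual ℝ _).symm.contDiff.of_le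
      le_top).contDiffAt.comp x₀ hfd).differentiableAt one_ne_zero)
  have hgrad : HasFDerivAt (gradient φ) (fderiv ℝ (gradient φ) x₀) x₀ := hgraddiff.hasFDerivAt
  have hexp : HasDerivAt (fun u : ℝ => Real.exp (lam * u)) (Real.exp (lam * φ x₀) * lam) (φ x₀) :=
    (Real.hasDerivAt_exp _).comp (φ x₀) (by simpa using (hasDerivAt_id (φ x₀)).const_mul lam)
  have hc : HasFDerivAt (fun x => Real.exp (lam * φ x))
      ((Real.exp (lam * φ x₀) * lam) • fderiv ℝ φ x₀) x₀ :=
    hexp.comp_hasFDerivAt x₀ hφdiff.hasFDerivAt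
  have hsmul := hc.smul hgrad
  have hcomp := hsmul.comp_hasDerivAt t hθd
  have hval : (Real.exp (lam * φ x₀) • fderiv ℝ (gradient φ) x₀
        + ((Real.exp (lam * φ x₀) * lam) • fderiv ℝ φ x₀).smulRight (gradient φ x₀)) (dθ t)
      = -(Real.exp (lam * φ x₀) • gradient f x₀) := by
    unfold Glam at hG
    rw [inner_grad] at hG
    simp only [ContinuousLinearMap.add_apply, ContinuousLinearMap.coe_smul', Pi.smul_apply,
      ContinuousLinearMap.smulRight_apply, ContinuousLinearMap.smul_apply]
    rw [← smul_neg, ← hG, smul_add, smul_smul, smul_eq_mul, mul_assoc]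
  have hnear : ∀ᶠ s in nhds t, θ s ∈ Θ :=
    hθd.continuousAt.preimage_mem_nhds (hopen.mem_nhds hx₀)
  have hev : (fun s => gradient (Philam lam φ) (θ s))
      =ᶠ[nhds t] (fun s => Real.exp (lam * φ (θ s)) • gradient φ (θ s)) :=
    hnear.mono fun s hs =>
      grad_Philam lam hlam φ (θ s) ((hφat (θ s) hs).differentiableAt (by simp))
  have hmain : HasDerivAt (fun s => Real.exp (lam * φ (θ s)) • gradient φ (θ s))
      (-(Real.exp (lam * φ x₀) • gradient f x₀)) t := by
    rw [← hval]; exact hcomp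
  exact hmain.congr_of_eventuallyEq hev
end

section
/- (Theorem 3.5, convergence bound.) Let λ ∈ ℝ \ {0}, let Θ ⊆ ℝ^d be open and convex, let φ : Θ → ℝ be regular c_λ-convex with Φ_λ := (1/λ)(exp(λφ) − 1), let f : Θ → ℝ be differentiable and convex on Θ, and let θ* ∈ Θ be a minimizer of f over Θ. Let θ : [0,∞) → Θ be a continuously differentiable conformal mirror descent trajectory for f. For t > 0 define τ_t := ∫₀ᵗ e^{λφ(θ_s)} ds and θ̂_t := (1/τ_t) ∫₀ᵗ e^{λφ(θ_s)} θ_s ds, and assume θ̂_t ∈ Θ. Then f(θ̂_t) − f(θ*) ≤ B_{Φ_λ}[θ* : θ_0] / τ_t. -/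
open Real Set
open scoped RealInnerProductSpace

lemma grad_ineq {d : ℕ} {Θ : Set (EuclideanSpace ℝ (Fin d))}
    {g : EuclideanSpace ℝ (Fin d) → ℝ} (hg : ConvexOn ℝ Θ g)
    {x y : EuclideanSpace ℝ (Fin d)} (hx : x ∈ Θ) (hy : y ∈ Θ)
    (hdx : DifferentiableAt ℝ g x) :
    g x + ⟪gradient g x, y - x⟫ ≤ g y := by
  have hcomp : ConvexOn ℝ ((AffineMap.lineMap x y : ℝ →ᵃ[ℝ] _) ⁻¹' Θ)
      (g ∘ (AffineMap.lineMap x y : ℝ →ᵃ[ℝ] _)) := hg.comp_affineMap _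
  have h0 : (0:ℝ) ∈ (AffineMap.lineMap x y : ℝ →ᵃ[ℝ] _) ⁻¹' Θ := by
    simp [AffineMap.lineMap_apply_zero, hx]
  have h1 : (1:ℝ) ∈ (AffineMap.lineMap x y : ℝ →ᵃ[ℝ] _) ⁻¹' Θ := by
    simp [AffineMap.lineMap_apply_one, hy]
  have hAd : HasDerivAt (fun r : ℝ => (AffineMap.lineMap x y : ℝ →ᵃ[ℝ] _) r) (y - x) 0 := by
    simp only [AffineMap.lineMap_apply_module]
    have hx1 : HasDerivAt (fun r:ℝ => (1 - r) • x) (-x) 0 := by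
      simpa using (((hasDerivAt_id (0:ℝ)).const_sub 1).smul_const x)
    have hy1 : HasDerivAt (fun r:ℝ => r • y) y 0 := by
      simpa using ((hasDerivAt_id (0:ℝ)).smul_const y)
    have := hx1.add hy1
    rw [show y - x = -x + y by abel]
    exact this
  have hgf : HasFDerivAt g
      (InnerProductSpace.toDual ℝ (EuclideanSpace ℝ (Fin d)) (gradient g x)) x := by
    have := hdx.hasGradientAt
    rwa [hasGradientAt_iff_hasFDerivAt] at this
  have hd : HasDerivAt (g ∘ (AffineMap.lineMap x y : ℝ →ᵃ[ℝ] _)) ⟪gradient g x, y - x⟫ 0 := by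
    have hx0 : (AffineMap.lineMap x y : ℝ →ᵃ[ℝ] _) (0:ℝ) = x := AffineMap.lineMap_apply_zero _ _
    have := (hx0 ▸ hgf).comp_hasDerivAt (0:ℝ) hAd
    simpa [InnerProductSpace.toDual_apply_apply] using this
  have hle := hcomp.le_slope_of_hasDerivAt h0 h1 one_pos hd
  have hs : slope (g ∘ (AffineMap.lineMap x y : ℝ →ᵃ[ℝ] _)) 0 1 = g y - g x := by
    simp [slope_def_field, AffineMap.lineMap_apply_zero, AffineMap.lineMap_apply_one]
  rw [hs] at hle
  linarith

lemma hasGradientAt_Philam {d : ℕ} (lam : ℝ) (hlam : lam ≠ 0)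
    {φ : EuclideanSpace ℝ (Fin d) → ℝ} {x : EuclideanSpace ℝ (Fin d)}
    (hφ : DifferentiableAt ℝ φ x) :
    HasGradientAt (Philam lam φ) (Real.exp (lam * φ x) • gradient φ x) x := by
  have hgf : HasFDerivAt φ
      (InnerProductSpace.toDual ℝ (EuclideanSpace ℝ (Fin d)) (gradient φ x)) x := by
    have := hφ.hasGradientAt
    rwa [hasGradientAt_iff_hasFDerivAt] at this
  have h1 : HasFDerivAt (fun y => lam * φ y)
      (lam • InnerProductSpace.toDual ℝ (EuclideanSpace ℝ (Fin d)) (gradient φ x)) x :=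
    hgf.const_mul lam
  have h2 := (Real.hasDerivAt_exp (lam * φ x)).comp_hasFDerivAt x h1
  have h3 : HasFDerivAt (Philam lam φ)
      ((1 / lam) • (Real.exp (lam * φ x) •
        (lam • InnerProductSpace.toDual ℝ (EuclideanSpace ℝ (Fin d)) (gradient φ x)))) x := by
    exact (h2.sub_const 1).const_mul (1 / lam)
  rw [hasGradientAt_iff_hasFDerivAt]
  refine h3.congr_fderiv ?_
  rw [map_smul, smul_smul, smul_smul]
  congr 1
  field_simp

lemma contDiffOn_gradient {d : ℕ} {Θ : Set (EuclideanSpace ℝ (Fin d))} (hopen : IsOpen Θ)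
    {φ : EuclideanSpace ℝ (Fin d) → ℝ} (hφ : ContDiffOn ℝ (⊤ : ℕ∞) φ Θ) :
    ContDiffOn ℝ (⊤ : ℕ∞) (gradient φ) Θ := by
  have h1 : ContDiffOn ℝ (⊤ : ℕ∞) (fderiv ℝ φ) Θ := hφ.fderiv_of_isOpen hopen (by simp)
  have h2 := (InnerProductSpace.toDual ℝ (EuclideanSpace ℝ (Fin d))).symm.contDiff (n := (⊤ : ℕ∞))
  exact h2.comp_contDiffOn h1

lemma hasFDerivAt_gradient_Philam {d : ℕ} (lam : ℝ) (hlam : lam ≠ 0)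
    {Θ : Set (EuclideanSpace ℝ (Fin d))} (hopen : IsOpen Θ)
    {φ : EuclideanSpace ℝ (Fin d) → ℝ} (hφ : ContDiffOn ℝ (⊤ : ℕ∞) φ Θ)
    {x : EuclideanSpace ℝ (Fin d)} (hx : x ∈ Θ) :
    HasFDerivAt (gradient (Philam lam φ))
      (Real.exp (lam * φ x) • fderiv ℝ (gradient φ) x +
        ((lam * Real.exp (lam * φ x)) •
          InnerProductSpace.toDual ℝ (EuclideanSpace ℝ (Fin d))
            (gradient φ x)).smulRight (gradient φ x)) x := by
  have hmem : ∀ᶠ y in nhds x, y ∈ Θ := hopen.mem_nhds hx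
  have hdiffφ : ∀ y ∈ Θ, DifferentiableAt ℝ φ y := fun y hy =>
    (hφ.contDiffAt (hopen.mem_nhds hy)).differentiableAt (by simp)
  have heq : gradient (Philam lam φ) =ᶠ[nhds x]
      fun y => Real.exp (lam * φ y) • gradient φ y := by
    filter_upwards [hmem] with y hy
    exact (hasGradientAt_Philam lam hlam (hdiffφ y hy)).gradient
  have hgradφ : DifferentiableAt ℝ (gradient φ) x :=
    ((contDiffOn_gradient hopen hφ).contDiffAt (hopen.mem_nhds hx)).differentiableAt (by simp)
  have hgf : HasFDerivAt φ
      (InnerProductSpace.toDual ℝ (EuclideanSpace ℝ (Fin d)) (gradient φ x)) x := by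
    have := (hdiffφ x hx).hasGradientAt
    rwa [hasGradientAt_iff_hasFDerivAt] at this
  have hc : HasFDerivAt (fun y => Real.exp (lam * φ y))
      ((lam * Real.exp (lam * φ x)) •
        InnerProductSpace.toDual ℝ (EuclideanSpace ℝ (Fin d)) (gradient φ x)) x := by
    have h2 := (Real.hasDerivAt_exp (lam * φ x)).comp_hasFDerivAt x (hgf.const_mul lam)
    refine h2.congr_fderiv ?_
    rw [smul_smul]
    congr 1
    ring
  have hprod := hc.smul hgradφ.hasFDerivAt
  exact hprod.congr_of_eventuallyEq heq

lemma fderiv_gradient_Philam_apply {d : ℕ} (lam : ℝ) (hlam : lam ≠ 0)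
    {Θ : Set (EuclideanSpace ℝ (Fin d))} (hopen : IsOpen Θ)
    {φ : EuclideanSpace ℝ (Fin d) → ℝ} (hφ : ContDiffOn ℝ (⊤ : ℕ∞) φ Θ)
    {x : EuclideanSpace ℝ (Fin d)} (hx : x ∈ Θ) (v : EuclideanSpace ℝ (Fin d)) :
    (Real.exp (lam * φ x) • fderiv ℝ (gradient φ) x +
        ((lam * Real.exp (lam * φ x)) •
          InnerProductSpace.toDual ℝ (EuclideanSpace ℝ (Fin d))
            (gradient φ x)).smulRight (gradient φ x)) v
      = Real.exp (lam * φ x) • Glam lam φ x v := by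
  simp only [ContinuousLinearMap.add_apply, ContinuousLinearMap.smul_apply,
    ContinuousLinearMap.smulRight_apply, InnerProductSpace.toDual_apply_apply, Glam]
  rw [smul_add, smul_smul]
  congr 1
  rw [smul_eq_mul]
  ring_nf

/-- Theorem 3.5, convergence bound: for convex `f` minimized at `θ*` and a
continuously differentiable conformal mirror descent trajectory on `[0, ∞)`, the weighted
average `θ̂_t` satisfies `f(θ̂_t) − f(θ*) ≤ B_{Φ_λ}[θ* : θ_0]/τ_t`. -/
theorem stmt_14 {d : ℕ} (lam : ℝ) (hlam : lam ≠ 0)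
    (Θ : Set (EuclideanSpace ℝ (Fin d))) (hopen : IsOpen Θ) (hconvΘ : Convex ℝ Θ)
    (φ : EuclideanSpace ℝ (Fin d) → ℝ) (hreg : IsRegularCConvex lam Θ φ)
    (f : EuclideanSpace ℝ (Fin d) → ℝ) (hf : DifferentiableOn ℝ f Θ)
    (hfconv : ConvexOn ℝ Θ f)
    (θstar : EuclideanSpace ℝ (Fin d)) (hθstar : θstar ∈ Θ)
    (hmin : ∀ x ∈ Θ, f θstar ≤ f x)
    (θ dθ : ℝ → EuclideanSpace ℝ (Fin d)) (hmem : ∀ t ∈ Set.Ici (0 : ℝ), θ t ∈ Θ)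
    (htraj : IsCMDTrajectory lam φ f (Set.Ici (0 : ℝ)) θ dθ)
    (hC1 : ContinuousOn dθ (Set.Ici (0 : ℝ)))
    (t : ℝ) (ht : 0 < t)
    (τ : ℝ) (hτ : τ = ∫ s in (0:ℝ)..t, Real.exp (lam * φ (θ s)))
    (θhat : EuclideanSpace ℝ (Fin d))
    (hθhat : θhat = (1 / τ) • ∫ s in (0:ℝ)..t, Real.exp (lam * φ (θ s)) • θ s)
    (hhatmem : θhat ∈ Θ) :
    f θhat - f θstar ≤ Breg (Philam lam φ) θstar (θ 0) / τ := by
  obtain ⟨hφsm, hPhiconv, -, -⟩ := hreg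
  have htnn : (0:ℝ) ≤ t := ht.le
  have hIcc : Set.uIcc (0:ℝ) t = Set.Icc 0 t := Set.uIcc_of_le htnn
  have hIccIci : Set.Icc (0:ℝ) t ⊆ Set.Ici 0 := fun s hs => hs.1
  have huIci : Set.uIcc (0:ℝ) t ⊆ Set.Ici 0 := hIcc ▸ hIccIci
  have hdφ : ∀ y ∈ Θ, DifferentiableAt ℝ φ y := fun y hy =>
    (hφsm.contDiffAt (hopen.mem_nhds hy)).differentiableAt (by simp)
  have hθcont : ContinuousOn θ (Set.Ici (0:ℝ)) := fun s hs =>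
    ((htraj s hs).1).continuousAt.continuousWithinAt
  have hθmaps : Set.MapsTo θ (Set.Ici (0:ℝ)) Θ := hmem
  have hφcont : ContinuousOn φ Θ := hφsm.continuousOn
  have hecont : ContinuousOn (fun s => Real.exp (lam * φ (θ s))) (Set.Ici (0:ℝ)) :=
    Real.continuous_exp.comp_continuousOn (continuousOn_const.mul (hφcont.comp hθcont hθmaps))
  have hInte : IntervalIntegrable (fun s => Real.exp (lam * φ (θ s)))
      MeasureTheory.volume 0 t := (hecont.mono huIci).intervalIntegrable
  have hτpos : 0 < τ := by
    rw [hτ]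
    exact intervalIntegral.intervalIntegral_pos_of_pos_on hInte
      (fun s _ => Real.exp_pos _) ht
  have hgradφcont : ContinuousOn (gradient φ) Θ := (contDiffOn_gradient hopen hφsm).continuousOn
  have hfdgcont : ContinuousOn (fderiv ℝ (gradient φ)) Θ :=
    (contDiffOn_gradient hopen hφsm).continuousOn_fderiv_of_isOpen hopen (by simp)
  have hGcont : ContinuousOn (fun s => Glam lam φ (θ s) (dθ s)) (Set.Ici (0:ℝ)) := by
    apply ContinuousOn.add
    · exact (hfdgcont.comp hθcont hθmaps).clm_apply hC1
    · exact ContinuousOn.smul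
        (continuousOn_const.mul ((hgradφcont.comp hθcont hθmaps).inner (𝕜 := ℝ) hC1))
        (hgradφcont.comp hθcont hθmaps)
  -- derivative of the Lyapunov function
  have hBderiv : ∀ s ∈ Set.Ici (0:ℝ), HasDerivAt (fun u => Breg (Philam lam φ) θstar (θ u))
      (Real.exp (lam * φ (θ s)) * ⟪gradient f (θ s), θstar - θ s⟫) s := by
    intro s hs
    obtain ⟨hθd, hG⟩ := htraj s hs
    have hsΘ : θ s ∈ Θ := hmem s hs
    have hgradΦ : HasGradientAt (Philam lam φ)
        (Real.exp (lam * φ (θ s)) • gradient φ (θ s)) (θ s) :=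
      hasGradientAt_Philam lam hlam (hdφ _ hsΘ)
    have hgΦval : gradient (Philam lam φ) (θ s)
        = Real.exp (lam * φ (θ s)) • gradient φ (θ s) := hgradΦ.gradient
    have hΦF : HasFDerivAt (Philam lam φ)
        (InnerProductSpace.toDual ℝ (EuclideanSpace ℝ (Fin d))
          (gradient (Philam lam φ) (θ s))) (θ s) := by
      have := hgradΦ.differentiableAt.hasGradientAt
      rwa [hasGradientAt_iff_hasFDerivAt] at this
    have h1 : HasDerivAt (fun u => Philam lam φ (θ u))
        (⟪gradient (Philam lam φ) (θ s), dθ s⟫) s := by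
      have := hΦF.comp_hasDerivAt s hθd
      simpa only [Function.comp_def, InnerProductSpace.toDual_apply_apply] using this
    have hL := hasFDerivAt_gradient_Philam lam hlam hopen hφsm hsΘ
    have h2 : HasDerivAt (fun u => gradient (Philam lam φ) (θ u))
        (Real.exp (lam * φ (θ s)) • Glam lam φ (θ s) (dθ s)) s := by
      have h2' := hL.comp_hasDerivAt s hθd
      rw [fderiv_gradient_Philam_apply lam hlam hopen hφsm hsΘ] at h2'
      exact h2'
    have h3 : HasDerivAt (fun u => θstar - θ u) (-(dθ s)) s := by
      simpa using (hθd.const_sub θstar)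
    have h4 := h2.inner ℝ h3
    have h5 := ((hasDerivAt_const s (Philam lam φ θstar)).sub h1).sub h4
    have hfun : (fun u => Philam lam φ θstar - Philam lam φ (θ u)
        - ⟪gradient (Philam lam φ) (θ u), θstar - θ u⟫)
        = fun u => Breg (Philam lam φ) θstar (θ u) := by
      funext u; simp [Breg]
    change HasDerivAt (fun u => Philam lam φ θstar - Philam lam φ (θ u)
        - ⟪gradient (Philam lam φ) (θ u), θstar - θ u⟫) _ s at h5
    rw [hfun] at h5
    convert h5 using 1
    rw [hG, hgΦval]
    simp only [inner_neg_right, real_inner_smul_left, inner_neg_left]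
    ring
  -- continuity of the derivative
  have hDcont : ContinuousOn
      (fun s => Real.exp (lam * φ (θ s)) * ⟪gradient f (θ s), θstar - θ s⟫)
      (Set.Ici (0:ℝ)) := by
    have haux : ContinuousOn
        (fun s => Real.exp (lam * φ (θ s)) * ⟪-(Glam lam φ (θ s) (dθ s)), θstar - θ s⟫)
        (Set.Ici (0:ℝ)) :=
      hecont.mul (hGcont.neg.inner (𝕜 := ℝ) (continuousOn_const.sub hθcont))
    apply haux.congr
    intro s hs
    have := (htraj s hs).2
    simp only [this, neg_neg]
  have hfθcont : ContinuousOn (fun s => f (θ s)) (Set.Ici (0:ℝ)) :=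
    hf.continuousOn.comp hθcont hθmaps
  -- FTC
  have hFTC : (∫ s in (0:ℝ)..t, Real.exp (lam * φ (θ s)) * ⟪gradient f (θ s), θstar - θ s⟫)
      = Breg (Philam lam φ) θstar (θ t) - Breg (Philam lam φ) θstar (θ 0) :=
    intervalIntegral.integral_eq_sub_of_hasDerivAt
      (fun s hs => hBderiv s (huIci hs)) ((hDcont.mono huIci).intervalIntegrable)
  -- pointwise inequality for the derivative
  have hptD : ∀ s ∈ Set.Icc (0:ℝ) t,
      Real.exp (lam * φ (θ s)) * ⟪gradient f (θ s), θstar - θ s⟫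
        ≤ Real.exp (lam * φ (θ s)) * (f θstar - f (θ s)) := by
    intro s hs
    have hsΘ : θ s ∈ Θ := hmem s (hIccIci hs)
    have := grad_ineq hfconv hsΘ hθstar (hf.differentiableAt (hopen.mem_nhds hsΘ))
    exact mul_le_mul_of_nonneg_left (by linarith) (Real.exp_pos _).le
  have hg1cont : ContinuousOn (fun s => Real.exp (lam * φ (θ s)) * (f θstar - f (θ s)))
      (Set.Ici (0:ℝ)) := hecont.mul (continuousOn_const.sub hfθcont)
  have hIneq1 : (∫ s in (0:ℝ)..t, Real.exp (lam * φ (θ s)) * ⟪gradient f (θ s), θstar - θ s⟫)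
      ≤ ∫ s in (0:ℝ)..t, Real.exp (lam * φ (θ s)) * (f θstar - f (θ s)) :=
    intervalIntegral.integral_mono_on htnn ((hDcont.mono huIci).intervalIntegrable)
      ((hg1cont.mono huIci).intervalIntegrable) hptD
  have hefcont : ContinuousOn (fun s => Real.exp (lam * φ (θ s)) * f (θ s)) (Set.Ici (0:ℝ)) :=
    hecont.mul hfθcont
  have hefint : IntervalIntegrable (fun s => Real.exp (lam * φ (θ s)) * f (θ s))
      MeasureTheory.volume 0 t := (hefcont.mono huIci).intervalIntegrable
  have hsplit : (∫ s in (0:ℝ)..t, Real.exp (lam * φ (θ s)) * (f θstar - f (θ s)))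
      = f θstar * τ - ∫ s in (0:ℝ)..t, Real.exp (lam * φ (θ s)) * f (θ s) := by
    have heq : (fun s => Real.exp (lam * φ (θ s)) * (f θstar - f (θ s)))
        = fun s => Real.exp (lam * φ (θ s)) * f θstar
            - Real.exp (lam * φ (θ s)) * f (θ s) := by
      funext s; ring
    rw [heq, intervalIntegral.integral_sub (hInte.mul_const _) hefint,
      intervalIntegral.integral_mul_const, hτ]
    ring
  -- nonnegativity of the Bregman divergence at time t
  have htIci : t ∈ Set.Ici (0:ℝ) := htnn
  have hBt : 0 ≤ Breg (Philam lam φ) θstar (θ t) := by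
    have hdt : DifferentiableAt ℝ (Philam lam φ) (θ t) :=
      (hasGradientAt_Philam lam hlam (hdφ _ (hmem t htIci))).differentiableAt
    have := grad_ineq hPhiconv (hmem t htIci) hθstar hdt
    simp only [Breg]
    linarith
  -- Jensen step via the gradient inequality at θhat
  have hdfh : DifferentiableAt ℝ f θhat := hf.differentiableAt (hopen.mem_nhds hhatmem)
  have hvecint : IntervalIntegrable (fun s => Real.exp (lam * φ (θ s)) • θ s)
      MeasureTheory.volume 0 t :=
    ((hecont.smul hθcont).mono huIci).intervalIntegrable
  have hItau : (∫ s in (0:ℝ)..t, Real.exp (lam * φ (θ s)) • θ s) = τ • θhat := by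
    rw [hθhat, smul_smul]
    rw [mul_one_div, div_self (ne_of_gt hτpos), one_smul]
  have hJ : τ * f θhat ≤ ∫ s in (0:ℝ)..t, Real.exp (lam * φ (θ s)) * f (θ s) := by
    set g := gradient f θhat with hgdef
    have hpt : ∀ s ∈ Set.Icc (0:ℝ) t,
        Real.exp (lam * φ (θ s)) * (f θhat - ⟪g, θhat⟫) + Real.exp (lam * φ (θ s)) * ⟪g, θ s⟫
          ≤ Real.exp (lam * φ (θ s)) * f (θ s) := by
      intro s hs
      have hsΘ : θ s ∈ Θ := hmem s (hIccIci hs)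
      have hgi := grad_ineq hfconv hhatmem hsΘ hdfh
      have hinner : ⟪g, θ s - θhat⟫ = ⟪g, θ s⟫ - ⟪g, θhat⟫ := inner_sub_right g _ _
      have h6 : f θhat - ⟪g, θhat⟫ + ⟪g, θ s⟫ ≤ f (θ s) := by
        have hgi2 : f θhat + (⟪g, θ s⟫ - ⟪g, θhat⟫) ≤ f (θ s) := by
          rw [← hinner, hgdef]; exact hgi
        linarith
      calc Real.exp (lam * φ (θ s)) * (f θhat - ⟪g, θhat⟫)
            + Real.exp (lam * φ (θ s)) * ⟪g, θ s⟫
          = Real.exp (lam * φ (θ s)) * (f θhat - ⟪g, θhat⟫ + ⟪g, θ s⟫) := by ring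
        _ ≤ Real.exp (lam * φ (θ s)) * f (θ s) :=
            mul_le_mul_of_nonneg_left h6 (Real.exp_pos _).le
    have hlhs1cont : ContinuousOn
        (fun s => Real.exp (lam * φ (θ s)) * (f θhat - ⟪g, θhat⟫)
          + Real.exp (lam * φ (θ s)) * ⟪g, θ s⟫) (Set.Ici (0:ℝ)) :=
      (hecont.mul continuousOn_const).add
        (hecont.mul (continuousOn_const.inner (𝕜 := ℝ) hθcont))
    have hint := intervalIntegral.integral_mono_on htnn
      ((hlhs1cont.mono huIci).intervalIntegrable) hefint hpt
    have hsum : (∫ s in (0:ℝ)..t,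
        (Real.exp (lam * φ (θ s)) * (f θhat - ⟪g, θhat⟫)
          + Real.exp (lam * φ (θ s)) * ⟪g, θ s⟫))
        = (f θhat - ⟪g, θhat⟫) * τ + τ * ⟪g, θhat⟫ := by
      have hinnerint : (∫ s in (0:ℝ)..t, Real.exp (lam * φ (θ s)) * ⟪g, θ s⟫)
          = τ * ⟪g, θhat⟫ := by
        have hcomm := (innerSL ℝ g).intervalIntegral_comp_comm hvecint
        have heq2 : (fun s => (innerSL ℝ g) (Real.exp (lam * φ (θ s)) • θ s))
            = fun s => Real.exp (lam * φ (θ s)) * ⟪g, θ s⟫ := by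
          funext s
          simp [real_inner_smul_right]
        rw [heq2] at hcomm
        rw [hcomm, hItau]
        simp [real_inner_smul_right]
      rw [intervalIntegral.integral_add (hInte.mul_const _)
        (g := fun s => Real.exp (lam * φ (θ s)) * ⟪g, θ s⟫) (((hecont.mul (continuousOn_const.inner (𝕜 := ℝ) hθcont)).mono huIci).intervalIntegrable),
        intervalIntegral.integral_mul_const, hinnerint, hτ]
      ring
    rw [hsum] at hint
    linarith
  rw [le_div_iff₀ hτpos]
  linarith
end
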